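/- arXiv:2303.14976 — 7 statements merged into one kernel-verified Lean document; each statement's English description precedes it below -/
import Mathlib

section
/- In the logic EC_n, the formula alive(U) ⇒ (D_U φ ⇒ φ) is derivable: axiom T holds restricted to alive groups. -/
/-- Formulas of epistemic logic with distributed knowledge:
atomic propositions, falsum, implication, and `D U φ` for groups `U` of agents. -/
inductive Fml (A : Type) : Type
  | atom : ℕ → Fml A
  | fls : Fml A
  | imp : Fml A → Fml A → Fml A
  | D : Finset A → Fml A → Fml A

namespace Fml
variable {A : Type}
/-- Negation. -/
def neg (φ : Fml A) : Fml A := imp φ fls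
/-- Truth. -/
def tru : Fml A := neg (fls (A := A))
/-- Conjunction. -/
def and (φ ψ : Fml A) : Fml A := neg (imp φ (neg ψ))
/-- `alive U := ¬ D_U ¬⊤`. -/
def alive (U : Finset A) : Fml A := neg (D U (neg tru))
/-- `dead a := K_a ⊥`. -/
def dead (a : A) : Fml A := D {a} fls
end Fml

/-- Propositional tautologies: formulas true under every valuation that
interprets `imp` and `fls` classically (atoms and `D`-formulas arbitrary). -/
def Taut {A : Type} (φ : Fml A) : Prop :=
  ∀ v : Fml A → Prop,
    (∀ ψ χ : Fml A, v (Fml.imp ψ χ) ↔ (v ψ → v χ)) → ¬ v Fml.fls → v φ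

/-- The Hilbert system EC_n: propositional tautologies, modus ponens,
necessitation, and axioms K, 4, B, Mono, Union. -/
inductive Prov {A : Type} [DecidableEq A] : Fml A → Prop
  | taut {φ : Fml A} : Taut φ → Prov φ
  | mp {φ ψ : Fml A} : Prov (Fml.imp φ ψ) → Prov φ → Prov ψ
  | nec (U : Finset A) {φ : Fml A} : Prov φ → Prov (Fml.D U φ)
  | axK (U : Finset A) (φ ψ : Fml A) :
      Prov (Fml.imp (Fml.D U (Fml.imp φ ψ)) (Fml.imp (Fml.D U φ) (Fml.D U ψ)))
  | ax4 (U : Finset A) (φ : Fml A) :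
      Prov (Fml.imp (Fml.D U φ) (Fml.D U (Fml.D U φ)))
  | axB (U : Finset A) (φ : Fml A) :
      Prov (Fml.imp φ (Fml.D U (Fml.neg (Fml.D U (Fml.neg φ)))))
  | axMono {U U' : Finset A} (φ : Fml A) :
      U ⊆ U' → Prov (Fml.imp (Fml.D U φ) (Fml.D U' φ))
  | axUnion (U U' : Finset A) :
      Prov (Fml.imp (Fml.and (Fml.alive U) (Fml.alive U')) (Fml.alive (U ∪ U')))

/-! If `D_U φ` held while `φ` failed, axiom B applied to `¬φ` would give `D_U ¬D_U φ`, and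
axiom 4 gives `D_U D_U φ`; by K these combine to `D_U ⊥`, i.e. `D_U ¬⊤`, which is exactly
what `alive U` denies. -/

open Fml

namespace Prov

variable {A : Type} [DecidableEq A]

lemma imp_trans {p q r : Fml A} (hpq : Prov (imp p q)) (hqr : Prov (imp q r)) :
    Prov (imp p r) :=
  have syllogism : Prov (imp (imp p q) (imp (imp q r) (imp p r))) :=
    taut fun v hv _ => by simp only [hv]; tauto
  (syllogism.mp hpq).mp hqr

lemma D_imp_D (U : Finset A) {p q : Fml A} (h : Prov (imp p q)) :
    Prov (imp (D U p) (D U q)) :=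
  (axK U p q).mp (nec U h)

lemma D_imp_D₂ (U : Finset A) {p q r : Fml A} (h : Prov (imp p (imp q r))) :
    Prov (imp (D U p) (imp (D U q) (D U r))) :=
  imp_trans (D_imp_D U h) (axK U q r)

lemma neg_imp_neg {p q : Fml A} (h : Prov (imp p q)) : Prov (imp (neg q) (neg p)) :=
  have contraposition : Prov (imp (imp p q) (imp (neg q) (neg p))) :=
    taut fun v hv _ => by simp only [neg, hv]; tauto
  contraposition.mp h

lemma neg_imp_D_neg_D (U : Finset A) (φ : Fml A) :
    Prov (imp (neg φ) (D U (neg (D U φ)))) :=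
  have double_neg : Prov (imp φ (neg (neg φ))) := taut fun v hv _ => by simp only [neg, hv]; tauto
  imp_trans (axB U (neg φ)) (D_imp_D U (neg_imp_neg (D_imp_D U double_neg)))

end Prov

/-- In EC_n, `alive U ⇒ (D_U φ ⇒ φ)` is derivable: axiom T restricted to alive groups. -/
theorem stmt6 {A : Type} [DecidableEq A] (U : Finset A) (φ : Fml A) :
    Prov (Fml.imp (Fml.alive U) (Fml.imp (Fml.D U φ) φ)) := by
  have D_contradiction : Prov (imp (D U (D U φ)) (imp (D U (neg (D U φ))) (D U (neg tru)))) :=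
    Prov.D_imp_D₂ U (Prov.taut fun v hv _ => by simp only [neg, tru, hv]; tauto)
  have assemble : Prov (imp (imp (D U φ) (D U (D U φ)))
      (imp (imp (neg φ) (D U (neg (D U φ))))
      (imp (imp (D U (D U φ)) (imp (D U (neg (D U φ))) (D U (neg tru))))
      (imp (alive U) (imp (D U φ) φ))))) :=
    Prov.taut fun v hv _ => by simp only [alive, neg, tru, hv]; tauto
  exact ((assemble.mp (Prov.ax4 U φ)).mp (Prov.neg_imp_D_neg_D U φ)).mp D_contradiction
end

section
/- The logic EC_n is sound with respect to generalized epistemic models: every theorem of EC_n holds at every world of every generalized epistemic model. -/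
/-- A generalized epistemic model: worlds, a PER `rel U` for each group `U`,
monotone in `U`, closed under union of alive groups, and a valuation. -/
structure GEM (A : Type) [DecidableEq A] where
  W : Type
  rel : Finset A → W → W → Prop
  symm : ∀ U w w', rel U w w' → rel U w' w
  trans : ∀ U w₁ w₂ w₃, rel U w₁ w₂ → rel U w₂ w₃ → rel U w₁ w₃
  mono : ∀ (U U' : Finset A), U ⊆ U' → ∀ w w', rel U' w w' → rel U w w'
  union : ∀ (U U' : Finset A) w, rel U w w → rel U' w w → rel (U ∪ U') w w
  val : W → ℕ → Prop

/-- The satisfaction relation `M, w ⊨ φ`. -/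
def Sat {A : Type} [DecidableEq A] (M : GEM A) : M.W → Fml A → Prop
  | w, Fml.atom p => M.val w p
  | _, Fml.fls => False
  | w, Fml.imp φ ψ => Sat M w φ → Sat M w ψ
  | w, Fml.D U φ => ∀ w', M.rel U w w' → Sat M w' φ

/-! Soundness is proved by induction on derivations. Each axiom is valid because of the matching
frame condition: K holds in every Kripke frame, 4 by transitivity, B by symmetry, Mono by
antimonotonicity of `rel U` in `U`. For Union, note that in a PER a world sees some world iff it
sees itself, so `alive U` holds at `w` exactly when `w ∼_U w`, and the union condition applies. -/

namespace GEM

variable {A : Type} [DecidableEq A] (M : GEM A)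

theorem rel_self_of_rel {U : Finset A} {w w' : M.W} (h : M.rel U w w') : M.rel U w w :=
  M.trans U w w' w h (M.symm U w w' h)

end GEM

section Semantics

variable {A : Type} [DecidableEq A] {M : GEM A} {w : M.W}

theorem sat_neg_iff {φ : Fml A} : Sat M w φ.neg ↔ ¬Sat M w φ := Iff.rfl

theorem sat_and_iff {φ ψ : Fml A} : Sat M w (φ.and ψ) ↔ Sat M w φ ∧ Sat M w ψ := by
  simp only [Fml.and, sat_neg_iff, Sat]
  tauto

theorem sat_alive_iff {U : Finset A} : Sat M w (Fml.alive U) ↔ M.rel U w w := by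
  simp only [Fml.alive, Fml.tru, sat_neg_iff, Sat]
  constructor
  · intro h
    by_contra hw
    exact h fun w' hr _ => hw (M.rel_self_of_rel hr)
  · exact fun hw h => h w hw id

theorem sat_of_taut {φ : Fml A} (h : Taut φ) : Sat M w φ :=
  h (Sat M w) (fun _ _ => Iff.rfl) id

end Semantics

/-- Soundness of EC_n: every theorem holds at every world of every generalized
epistemic model. -/
theorem stmt7 {A : Type} [DecidableEq A] (φ : Fml A) (h : Prov φ) :
    ∀ (M : GEM A) (w : M.W), Sat M w φ := by
  induction h with
  | taut ht => exact fun M w => sat_of_taut ht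
  | mp _ _ ih_imp ih => exact fun M w => ih_imp M w (ih M w)
  | nec _ _ ih => exact fun M _ w' _ => ih M w'
  | axK => exact fun M w hImp hφ w' hr => hImp w' hr (hφ w' hr)
  | ax4 U => exact fun M w hφ w₁ h₁ w₂ h₂ => hφ w₂ (M.trans U w w₁ w₂ h₁ h₂)
  | axB U => exact fun M w hφ w' hr hBox => hBox w (M.symm U w w' hr) hφ
  | axMono φ hsub => exact fun M w hφ w' hr => hφ w' (M.mono _ _ hsub w w' hr)
  | axUnion U U' =>
    intro M w hAlive
    obtain ⟨hU, hU'⟩ := sat_and_iff.mp hAlive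
    exact sat_alive_iff.mpr (M.union U U' w (sat_alive_iff.mp hU) (sat_alive_iff.mp hU'))
end

section
/- In the canonical model of EC_n, if Γ ∼_U Γ and Γ ∼_{U'} Γ then Γ ∼_{U∪U'} Γ (closure under union of alive groups). -/
variable {A : Type} [DecidableEq A]

/-- A set of formulas is consistent if no finite conjunction of its members
proves falsum in EC_n. -/
def ConSet (Γ : Set (Fml A)) : Prop :=
  ¬ ∃ l : List (Fml A), (∀ ψ ∈ l, ψ ∈ Γ) ∧
      Prov (Fml.imp (l.foldr Fml.and Fml.tru) Fml.fls)

/-- Maximal consistent sets of formulas. -/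
def MCS (Γ : Set (Fml A)) : Prop :=
  ConSet Γ ∧ ∀ φ : Fml A, φ ∉ Γ → ¬ ConSet (insert φ Γ)

/-- The canonical accessibility relation: `Γ ∼_U Δ` iff `D_U φ ∈ Γ` implies `φ ∈ Δ`. -/
def canRel (U : Finset A) (Γ Δ : Set (Fml A)) : Prop :=
  ∀ φ : Fml A, Fml.D U φ ∈ Γ → φ ∈ Δ

theorem prov_foldr_and_append (l₁ l₂ : List (Fml A)) :
    Prov (Fml.imp ((l₁ ++ l₂).foldr Fml.and Fml.tru)
      (Fml.and (l₁.foldr Fml.and Fml.tru) (l₂.foldr Fml.and Fml.tru))) := by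
  induction l₁ with
  | nil =>
    refine Prov.taut fun v hv _ => ?_
    simp only [List.nil_append, List.foldr, Fml.and, Fml.neg, Fml.tru, hv]
    tauto
  | cons a t ih =>
    refine (Prov.taut fun v hv _ => ?_).mp ih
    simp only [List.cons_append, List.foldr, Fml.and, Fml.neg, hv]
    tauto

/-- Chosen so that `ConSet Γ` is definitionally `¬ ProvFrom Γ Fml.fls`. -/
def ProvFrom (Γ : Set (Fml A)) (φ : Fml A) : Prop :=
  ∃ l : List (Fml A), (∀ ψ ∈ l, ψ ∈ Γ) ∧ Prov (Fml.imp (l.foldr Fml.and Fml.tru) φ)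

namespace ProvFrom

variable {Γ : Set (Fml A)} {φ ψ : Fml A}

theorem of_prov (h : Prov φ) : ProvFrom Γ φ :=
  ⟨[], by simp, (Prov.taut fun v hv _ => by simp only [hv]; tauto :
    Prov (Fml.imp φ (Fml.imp Fml.tru φ))).mp h⟩

theorem of_mem (h : φ ∈ Γ) : ProvFrom Γ φ :=
  ⟨[φ], by simpa using h,
    Prov.taut fun v hv _ => by simp only [List.foldr, Fml.and, Fml.neg, hv]; tauto⟩

theorem mp (hφψ : ProvFrom Γ (Fml.imp φ ψ)) (hφ : ProvFrom Γ φ) : ProvFrom Γ ψ := by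
  obtain ⟨l₁, hl₁, hp₁⟩ := hφψ
  obtain ⟨l₂, hl₂, hp₂⟩ := hφ
  refine ⟨l₁ ++ l₂, fun χ hχ => (List.mem_append.mp hχ).elim (hl₁ χ) (hl₂ χ), ?_⟩
  refine (((Prov.taut fun v hv _ => ?_).mp (prov_foldr_and_append l₁ l₂)).mp hp₁).mp hp₂
  simp only [Fml.and, Fml.neg, hv]
  tauto

theorem imp_of_insert (h : ProvFrom (insert φ Γ) ψ) : ProvFrom Γ (Fml.imp φ ψ) := by
  obtain ⟨l, hl, hp⟩ := h
  induction l generalizing ψ with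
  | nil =>
    refine of_prov ((Prov.taut fun v hv _ => ?_ :
      Prov (Fml.imp (Fml.imp Fml.tru ψ) (Fml.imp φ ψ))).mp hp)
    simp only [Fml.tru, Fml.neg, hv]
    tauto
  | cons a t ih =>
    have hcurry : Prov (Fml.imp (t.foldr Fml.and Fml.tru) (Fml.imp a ψ)) :=
      (Prov.taut fun v hv _ => by simp only [List.foldr, Fml.and, Fml.neg, hv]; tauto :
        Prov (Fml.imp (Fml.imp ((a :: t).foldr Fml.and Fml.tru) ψ) _)).mp hp
    have ih' : ProvFrom Γ (Fml.imp φ (Fml.imp a ψ)) :=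
      ih (fun χ hχ => hl χ (List.mem_cons_of_mem a hχ)) hcurry
    rcases hl a List.mem_cons_self with rfl | ha
    · exact (of_prov (Prov.taut fun v hv _ => by simp only [hv]; tauto)).mp ih'
    · exact ((of_prov (Prov.taut fun v hv _ => by simp only [hv]; tauto)).mp ih').mp (of_mem ha)

end ProvFrom

namespace MCS

variable {Γ : Set (Fml A)} (hΓ : MCS Γ) {φ ψ : Fml A}
include hΓ

theorem mem_of_provFrom (h : ProvFrom Γ φ) : φ ∈ Γ := by
  by_contra hφ
  have hneg : ProvFrom Γ (Fml.neg φ) := ProvFrom.imp_of_insert (not_not.mp (hΓ.2 φ hφ))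
  exact hΓ.1 (hneg.mp h)

theorem fls_not_mem : (Fml.fls : Fml A) ∉ Γ := fun h => hΓ.1 (ProvFrom.of_mem h)

theorem prov_mem (h : Prov φ) : φ ∈ Γ := hΓ.mem_of_provFrom (ProvFrom.of_prov h)

theorem mp_mem (hφψ : Fml.imp φ ψ ∈ Γ) (hφ : φ ∈ Γ) : ψ ∈ Γ :=
  hΓ.mem_of_provFrom ((ProvFrom.of_mem hφψ).mp (ProvFrom.of_mem hφ))

theorem neg_mem_of_not_mem (h : φ ∉ Γ) : Fml.neg φ ∈ Γ :=
  hΓ.mem_of_provFrom (ProvFrom.imp_of_insert (not_not.mp (hΓ.2 φ h)))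

theorem mem_of_neg_not_mem (h : Fml.neg φ ∉ Γ) : φ ∈ Γ :=
  hΓ.mp_mem (hΓ.prov_mem (Prov.taut fun v hv _ => by simp only [Fml.neg, hv]; tauto))
    (hΓ.neg_mem_of_not_mem h)

theorem and_mem (hφ : φ ∈ Γ) (hψ : ψ ∈ Γ) : Fml.and φ ψ ∈ Γ :=
  hΓ.mp_mem (hΓ.mp_mem (hΓ.prov_mem
    (Prov.taut fun v hv _ => by simp only [Fml.and, Fml.neg, hv]; tauto)) hφ) hψ

theorem D_mem_of_prov_imp {U : Finset A} (hφψ : Prov (Fml.imp φ ψ)) (hφ : Fml.D U φ ∈ Γ) :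
    Fml.D U ψ ∈ Γ :=
  hΓ.mp_mem (hΓ.prov_mem ((Prov.axK U φ ψ).mp (Prov.nec U hφψ))) hφ

theorem alive_mem_of_canRel_self {U : Finset A} (h : canRel U Γ Γ) : Fml.alive U ∈ Γ := by
  by_contra hU
  have hnegtru : Fml.neg Fml.tru ∈ Γ := h _ (hΓ.mem_of_neg_not_mem hU)
  have htru : (Fml.tru : Fml A) ∈ Γ :=
    hΓ.prov_mem (Prov.taut fun v hv _ => by simp only [Fml.tru, Fml.neg, hv]; tauto)
  exact hΓ.fls_not_mem (hΓ.mp_mem hnegtru htru)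

theorem canRel_self_of_alive_mem {U : Finset A} (hU : Fml.alive U ∈ Γ) : canRel U Γ Γ := by
  intro φ hDφ
  by_contra hφ
  have hB : Fml.D U (Fml.neg (Fml.D U (Fml.neg (Fml.neg φ)))) ∈ Γ :=
    hΓ.mp_mem (hΓ.prov_mem (Prov.axB U _)) (hΓ.neg_mem_of_not_mem hφ)
  have hDD : Fml.D U (Fml.D U (Fml.neg (Fml.neg φ))) ∈ Γ :=
    hΓ.mp_mem (hΓ.prov_mem (Prov.ax4 U _)) (hΓ.D_mem_of_prov_imp
      (Prov.taut fun v hv _ => by simp only [Fml.neg, hv]; tauto) hDφ)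
  have hDfls : Fml.D U Fml.fls ∈ Γ := hΓ.mp_mem (hΓ.mp_mem (hΓ.prov_mem (Prov.axK U _ _)) hB) hDD
  have hDnegtru : Fml.D U (Fml.neg Fml.tru) ∈ Γ :=
    hΓ.D_mem_of_prov_imp (Prov.taut fun v hv _ => by simp only [Fml.neg, Fml.tru, hv]; tauto) hDfls
  exact hΓ.fls_not_mem (hΓ.mp_mem hU hDnegtru)

theorem canRel_self_iff_alive_mem {U : Finset A} : canRel U Γ Γ ↔ Fml.alive U ∈ Γ :=
  ⟨hΓ.alive_mem_of_canRel_self, hΓ.canRel_self_of_alive_mem⟩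

end MCS

/-- In the canonical model of EC_n, the relations are closed under union of
alive groups: `Γ ∼_U Γ` and `Γ ∼_{U'} Γ` imply `Γ ∼_{U ∪ U'} Γ`. -/
theorem stmt10 (U U' : Finset A) (Γ : Set (Fml A)) (hΓ : MCS Γ)
    (h : canRel U Γ Γ) (h' : canRel U' Γ Γ) : canRel (U ∪ U') Γ Γ := by
  rw [hΓ.canRel_self_iff_alive_mem] at h h' ⊢
  exact hΓ.mp_mem (hΓ.prov_mem (Prov.axUnion U U')) (hΓ.and_mem h h')
end

section
/- Truth Lemma: in the canonical model M^c of EC_n, for every formula φ and every maximal consistent set Γ, φ ∈ Γ if and only if M^c, Γ ⊨ φ. -/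
variable {A : Type} [DecidableEq A]

/-- Satisfaction in the canonical model of EC_n, whose worlds are the maximal
consistent sets, with `Γ ∼_U Δ` iff `D_U φ ∈ Γ` implies `φ ∈ Δ`, and valuation
`L(Γ) = Γ ∩ AP`. -/
def canSat : Fml A → {Γ : Set (Fml A) // MCS Γ} → Prop
  | Fml.atom p, Γ => Fml.atom p ∈ Γ.1
  | Fml.fls, _ => False
  | Fml.imp φ ψ, Γ => canSat φ Γ → canSat ψ Γ
  | Fml.D U φ, Γ => ∀ Δ : {Γ : Set (Fml A) // MCS Γ}, canRel U Γ.1 Δ.1 → canSat φ Δ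

/-!
A maximal consistent set is deductively closed, omits `⊥` and contains `φ → ψ` exactly when
`φ ∉ Γ` or `ψ ∈ Γ`, so the propositional cases of the induction are immediate. For `D_U φ ∉ Γ`,
the set `{ψ | D_U ψ ∈ Γ} ∪ {¬φ}` is consistent: otherwise `ψ₁ ∧ ⋯ ∧ ψₙ → φ` is provable with
`D_U ψᵢ ∈ Γ`, and necessitation with K would put `D_U φ` into `Γ`. Lindenbaum's lemma extends it to a
maximal consistent `Δ` with `Γ ∼_U Δ` and `φ ∉ Δ`.
-/

namespace Fml

section
variable {A : Type}

def IsClassicalVal (v : Fml A → Prop) : Prop :=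
  (∀ φ ψ : Fml A, v (imp φ ψ) ↔ (v φ → v ψ)) ∧ ¬ v fls

abbrev conj (l : List (Fml A)) : Fml A := l.foldr and tru

def TautEntails (l : List (Fml A)) (φ : Fml A) : Prop :=
  ∀ v : Fml A → Prop, IsClassicalVal v → (∀ ψ ∈ l, v ψ) → v φ

namespace IsClassicalVal

variable {v : Fml A → Prop} {φ ψ : Fml A}

theorem imp_iff (hv : IsClassicalVal v) : v (imp φ ψ) ↔ (v φ → v ψ) := hv.1 φ ψ

theorem neg_iff (hv : IsClassicalVal v) : v (neg φ) ↔ ¬ v φ := by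
  simp only [neg, hv.imp_iff, hv.2, imp_false]

theorem tru (hv : IsClassicalVal v) : v tru := by
  simp only [Fml.tru, hv.neg_iff, hv.2, not_false_eq_true]

theorem and_iff (hv : IsClassicalVal v) : v (and φ ψ) ↔ v φ ∧ v ψ := by
  simp only [Fml.and, hv.neg_iff, hv.imp_iff, Classical.not_imp, not_not]

theorem conj_iff (hv : IsClassicalVal v) {l : List (Fml A)} :
    v (conj l) ↔ ∀ φ ∈ l, v φ := by
  induction l with
  | nil => simpa using hv.tru
  | cons a l ih => simp [hv.and_iff, ih]

end IsClassicalVal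
end
end Fml

open Fml

theorem Prov.of_tautEntails {l : List (Fml A)} {φ : Fml A} (h : TautEntails l φ)
    (hl : ∀ ψ ∈ l, Prov ψ) : Prov φ := by
  induction l generalizing φ with
  | nil => exact Prov.taut fun v himp hfls => h v ⟨himp, hfls⟩ (by simp)
  | cons a l ih =>
    refine Prov.mp (ih (φ := imp a φ) ?_ fun ψ hψ => hl ψ (by simp [hψ])) (hl a (by simp))
    exact fun v hv hl' => hv.imp_iff.2 fun ha => h v hv (List.forall_mem_cons.2 ⟨ha, hl'⟩)

theorem Prov.of_tautEntails₁ {φ ψ : Fml A} (hφ : Prov φ) (h : TautEntails [φ] ψ) :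
    Prov ψ :=
  Prov.of_tautEntails h (by simpa using hφ)

theorem Prov.of_tautEntails₂ {φ ψ χ : Fml A} (hφ : Prov φ) (hψ : Prov ψ)
    (h : TautEntails [φ, ψ] χ) : Prov χ :=
  Prov.of_tautEntails h (by simp [hφ, hψ])

theorem Prov.D_imp_imp (U : Finset A) {φ ψ χ : Fml A} (h : Prov (imp φ (imp ψ χ))) :
    Prov (imp (D U φ) (imp (D U ψ) (D U χ))) :=
  Prov.of_tautEntails₂ (Prov.mp (Prov.axK U _ _) (Prov.nec U h)) (Prov.axK U ψ χ)
    fun v hv h => by simp_all [hv.imp_iff]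

theorem Prov.conj_map_D (U : Finset A) (l : List (Fml A)) :
    Prov (imp (conj (l.map (D U))) (D U (conj l))) := by
  induction l with
  | nil =>
    have hnec : Prov (D U (tru : Fml A)) :=
      Prov.nec U (Prov.taut fun v himp hfls => IsClassicalVal.tru ⟨himp, hfls⟩)
    exact Prov.of_tautEntails₁ hnec fun v hv h => by simp_all [hv.imp_iff]
  | cons a l ih =>
    have hpair : Prov (imp a (imp (conj l) (conj (a :: l)))) :=
      Prov.of_tautEntails (l := []) (fun v hv _ =>
        hv.imp_iff.2 fun ha => hv.imp_iff.2 fun hl => hv.and_iff.2 ⟨ha, hl⟩) (by simp)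
    refine Prov.of_tautEntails₂ ih (Prov.D_imp_imp U hpair) fun v hv h => ?_
    simp_all [hv.imp_iff, hv.and_iff]

/-- `ConSet Γ` unfolds to `¬ Der Γ fls`. -/
def Der (Γ : Set (Fml A)) (φ : Fml A) : Prop :=
  ∃ l : List (Fml A), (∀ ψ ∈ l, ψ ∈ Γ) ∧ Prov (imp (conj l) φ)

namespace Der

variable {Γ : Set (Fml A)} {φ ψ : Fml A}

theorem of_mem (h : φ ∈ Γ) : Der Γ φ :=
  ⟨[φ], by simpa using h, Prov.of_tautEntails (l := [])
    (fun v hv _ => hv.imp_iff.2 fun h => hv.conj_iff.1 h φ (by simp)) (by simp)⟩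

theorem of_tautEntails₁ (h : Der Γ φ) (hφψ : TautEntails [φ] ψ) : Der Γ ψ := by
  obtain ⟨l, hl, p⟩ := h
  refine ⟨l, hl, Prov.of_tautEntails₁ p fun v hv h => ?_⟩
  simp only [List.mem_singleton, forall_eq, hv.imp_iff] at h ⊢
  exact fun hl => hφψ v hv (by simpa using h hl)

theorem mp (h₁ : Der Γ (imp φ ψ)) (h₂ : Der Γ φ) : Der Γ ψ := by
  obtain ⟨l₁, hl₁, p₁⟩ := h₁
  obtain ⟨l₂, hl₂, p₂⟩ := h₂
  refine ⟨l₁ ++ l₂, by simpa [or_imp, forall_and] using ⟨hl₁, hl₂⟩,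
    Prov.of_tautEntails₂ p₁ p₂ fun v hv h => ?_⟩
  simp only [List.mem_cons, List.not_mem_nil, or_false, forall_eq_or_imp, forall_eq, hv.imp_iff,
    hv.conj_iff] at h
  rw [hv.imp_iff, hv.conj_iff, List.forall_mem_append]
  tauto

theorem imp_of_insert (h : Der (insert ψ Γ) φ) : Der Γ (imp ψ φ) := by
  classical
  obtain ⟨l, hl, p⟩ := h
  refine ⟨l.filter (· ∈ Γ), fun χ hχ => by simpa using (List.mem_filter.1 hχ).2,
    Prov.of_tautEntails₁ p fun v hv h => ?_⟩
  simp only [List.mem_singleton, forall_eq, hv.imp_iff, hv.conj_iff] at h ⊢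
  refine fun hvΓ hψ => h fun χ hχ => ?_
  rcases hl χ hχ with rfl | hχΓ
  · exact hψ
  · exact hvΓ χ (List.mem_filter.2 ⟨hχ, by simpa using hχΓ⟩)

theorem D_of_unbox (U : Finset A) (h : Der {ψ | D U ψ ∈ Γ} φ) : Der Γ (D U φ) := by
  obtain ⟨l, hl, p⟩ := h
  refine ⟨l.map (D U), by simpa using hl, Prov.of_tautEntails₂ (Prov.conj_map_D U l)
    (Prov.mp (Prov.axK U _ _) (Prov.nec U p)) fun v hv h => ?_⟩
  simp_all [hv.imp_iff]

end Der

namespace MCS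

variable {Γ : Set (Fml A)} {φ ψ : Fml A}

theorem fls_not_mem_s11 (hΓ : MCS Γ) : fls ∉ Γ := fun h => hΓ.1 (Der.of_mem h)

theorem der_imp_fls_of_not_mem (hΓ : MCS Γ) (h : φ ∉ Γ) : Der Γ (imp φ fls) :=
  Der.imp_of_insert (not_not.1 (hΓ.2 φ h))

theorem mem_of_der (hΓ : MCS Γ) (h : Der Γ φ) : φ ∈ Γ :=
  by_contra fun hn => hΓ.1 (Der.mp (hΓ.der_imp_fls_of_not_mem hn) h)

theorem mem_of_tautEntails (hΓ : MCS Γ) {l : List (Fml A)} (h : TautEntails l φ)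
    (hl : ∀ ψ ∈ l, ψ ∈ Γ) : φ ∈ Γ :=
  hΓ.mem_of_der ⟨l, hl, Prov.of_tautEntails (l := [])
    (fun v hv _ => hv.imp_iff.2 fun hc => h v hv (hv.conj_iff.1 hc)) (by simp)⟩

theorem imp_mem_iff (hΓ : MCS Γ) : imp φ ψ ∈ Γ ↔ (φ ∈ Γ → ψ ∈ Γ) := by
  refine ⟨fun himp hφ => hΓ.mem_of_tautEntails (l := [imp φ ψ, φ])
    (fun v hv h => by simp_all [hv.imp_iff]) (by simp [himp, hφ]), fun h => ?_⟩
  by_cases hφ : φ ∈ Γ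
  · exact hΓ.mem_of_tautEntails (l := [ψ]) (fun v hv h => by simp_all [hv.imp_iff])
      (by simp [h hφ])
  · have hnφ : imp φ fls ∈ Γ := hΓ.mem_of_der (hΓ.der_imp_fls_of_not_mem hφ)
    exact hΓ.mem_of_tautEntails (l := [imp φ fls]) (fun v hv h => by simp_all [hv.imp_iff, hv.2])
      (by simp [hnφ])

end MCS

theorem ConSet.sUnion_of_isChain {c : Set (Set (Fml A))} (hc : ∀ T ∈ c, ConSet T)
    (hchain : IsChain (· ⊆ ·) c) (hne : c.Nonempty) : ConSet (⋃₀ c) := by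
  rintro ⟨l, hl, p⟩
  obtain ⟨T, hTc, hlT⟩ := hchain.directedOn.exists_mem_subset_of_finite_of_subset_sUnion hne
    (List.finite_toSet l) hl
  exact hc T hTc ⟨l, hlT, p⟩

theorem ConSet.exists_mcs_superset {S : Set (Fml A)} (hS : ConSet S) :
    ∃ Δ, S ⊆ Δ ∧ MCS Δ := by
  obtain ⟨Δ, hSΔ, hmax⟩ := zorn_subset_nonempty {T : Set (Fml A) | ConSet T}
    (fun c hc hchain hne => ⟨⋃₀ c, ConSet.sUnion_of_isChain hc hchain hne,
      fun _ => Set.subset_sUnion_of_mem⟩) S hS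
  exact ⟨Δ, hSΔ, hmax.1, fun φ hφ hcon =>
    hφ (hmax.2 hcon (Set.subset_insert φ Δ) (Set.mem_insert φ Δ))⟩

theorem MCS.exists_canRel_not_mem {Γ : Set (Fml A)} (hΓ : MCS Γ) {U : Finset A} {φ : Fml A}
    (h : D U φ ∉ Γ) : ∃ Δ, MCS Δ ∧ canRel U Γ Δ ∧ φ ∉ Δ := by
  have hcon : ConSet (insert (neg φ) {ψ | D U ψ ∈ Γ}) := fun hder =>
    h (hΓ.mem_of_der (Der.D_of_unbox U (Der.of_tautEntails₁ (Der.imp_of_insert hder)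
      fun v hv h => by simpa [neg, hv.imp_iff, hv.2] using h)))
  obtain ⟨Δ, hsub, hΔ⟩ := hcon.exists_mcs_superset
  exact ⟨Δ, hΔ, fun ψ hψ => hsub (Set.mem_insert_of_mem _ hψ),
    fun hφ => hΔ.fls_not_mem_s11 (hΔ.imp_mem_iff.1 (hsub (Set.mem_insert _ _)) hφ)⟩

/-- Truth Lemma: in the canonical model of EC_n, `φ ∈ Γ` iff `M^c, Γ ⊨ φ`. -/
theorem stmt11 (Γ : {Γ : Set (Fml A) // MCS Γ}) (φ : Fml A) :
    φ ∈ Γ.1 ↔ canSat φ Γ := by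
  induction φ generalizing Γ with
  | atom p => exact Iff.rfl
  | fls => exact iff_false_intro Γ.2.fls_not_mem_s11
  | imp φ ψ ihφ ihψ => exact Γ.2.imp_mem_iff.trans (imp_congr (ihφ Γ) (ihψ Γ))
  | D U φ ih =>
    refine ⟨fun h Δ hΓΔ => (ih Δ).1 (hΓΔ φ h), fun h => by_contra fun hn => ?_⟩
    obtain ⟨Δ, hΔ, hΓΔ, hφ⟩ := Γ.2.exists_canRel_not_mem hn
    exact hφ ((ih ⟨Δ, hΔ⟩).2 (h ⟨Δ, hΔ⟩ hΓΔ))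
end

section
/- Completeness of EC_n for generalized epistemic models: every formula consistent with EC_n is satisfiable at some world of some generalized epistemic model; equivalently, every formula valid in all generalized epistemic models is a theorem of EC_n. -/
/-!
Canonical model construction. Worlds are the maximal consistent sets, and `Γ ∼_U Δ` holds when
every `φ` with `D_U φ ∈ Γ` lies in `Δ`. Axioms B and 4 make each `∼_U` a PER, and Mono makes it
antitone in `U`. The existence lemma shows `Γ ∼_U Γ ↔ alive U ∈ Γ`: if `D_U ¬⊤ ∉ Γ` then `Γ` has
some `∼_U`-successor, and a PER relates any world with a successor to itself. So closure under
union of alive groups is exactly the Union axiom. The truth lemma then turns a consistent formula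
into a satisfiable one.
-/

section Completeness
variable {A : Type} [DecidableEq A]

namespace Prov

theorem imp_self (φ : Fml A) : Prov (Fml.imp φ φ) :=
  taut fun _ hv _ => (hv φ φ).2 id

theorem imp_intro (φ ψ : Fml A) : Prov (Fml.imp ψ (Fml.imp φ ψ)) :=
  taut fun v hv _ => by simp only [hv]; tauto

theorem imp_distrib (φ ψ χ : Fml A) :
    Prov (Fml.imp (Fml.imp φ (Fml.imp ψ χ)) (Fml.imp (Fml.imp φ ψ) (Fml.imp φ χ))) :=
  taut fun v hv _ => by simp only [hv]; tauto

theorem neg_imp (φ ψ : Fml A) : Prov (Fml.imp (Fml.neg φ) (Fml.imp φ ψ)) :=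
  taut fun v hv _ => by simp only [Fml.neg, hv]; tauto

theorem imp_neg_neg (φ : Fml A) : Prov (Fml.imp φ (Fml.neg (Fml.neg φ))) :=
  taut fun v hv _ => by simp only [Fml.neg, hv]; tauto

theorem neg_neg_imp (φ : Fml A) : Prov (Fml.imp (Fml.neg (Fml.neg φ)) φ) :=
  taut fun v hv _ => by simp only [Fml.neg, hv]; tauto

theorem D_mono {U : Finset A} {φ ψ : Fml A} (h : Prov (Fml.imp φ ψ)) :
    Prov (Fml.imp (Fml.D U φ) (Fml.D U ψ)) :=
  mp (axK U φ ψ) (nec U h)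

end Prov

inductive Derivable (S : Set (Fml A)) : Fml A → Prop
  | ax {φ} : φ ∈ S → Derivable S φ
  | prov {φ} : Prov φ → Derivable S φ
  | mp {φ ψ} : Derivable S (Fml.imp φ ψ) → Derivable S φ → Derivable S ψ

namespace Derivable

variable {S T : Set (Fml A)} {φ ψ : Fml A}

theorem mono (hST : S ⊆ T) (h : Derivable S φ) : Derivable T φ := by
  induction h with
  | ax h => exact ax (hST h)
  | prov h => exact prov h
  | mp _ _ ih₁ ih₂ => exact mp ih₁ ih₂

theorem imp_of_insert (h : Derivable (insert φ S) ψ) : Derivable S (Fml.imp φ ψ) := by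
  induction h with
  | ax h =>
    rcases h with rfl | h
    · exact prov (Prov.imp_self _)
    · exact mp (prov (Prov.imp_intro _ _)) (ax h)
  | prov h => exact mp (prov (Prov.imp_intro _ _)) (prov h)
  | mp _ _ ih₁ ih₂ => exact mp (mp (prov (Prov.imp_distrib _ _ _)) ih₁) ih₂

theorem of_insert_neg_fls (h : Derivable (insert (Fml.neg φ) S) Fml.fls) : Derivable S φ :=
  mp (prov (Prov.neg_neg_imp φ)) h.imp_of_insert

theorem prov_of_empty (h : Derivable ∅ φ) : Prov φ := by
  induction h with
  | ax h => exact absurd h (Set.notMem_empty _)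
  | prov h => exact h
  | mp _ _ ih₁ ih₂ => exact Prov.mp ih₁ ih₂

theorem exists_of_sUnion {c : Set (Set (Fml A))} (hc : IsChain (· ⊆ ·) c) (hne : c.Nonempty)
    (h : Derivable (⋃₀ c) φ) : ∃ s ∈ c, Derivable s φ := by
  induction h with
  | ax h =>
    obtain ⟨s, hs, hφ⟩ := Set.mem_sUnion.1 h
    exact ⟨s, hs, ax hφ⟩
  | prov h =>
    obtain ⟨s, hs⟩ := hne
    exact ⟨s, hs, prov h⟩
  | mp _ _ ih₁ ih₂ =>
    obtain ⟨s₁, hs₁, h₁⟩ := ih₁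
    obtain ⟨s₂, hs₂, h₂⟩ := ih₂
    rcases hc.total hs₁ hs₂ with h | h
    · exact ⟨s₂, hs₂, mp (h₁.mono h) h₂⟩
    · exact ⟨s₁, hs₁, mp h₁ (h₂.mono h)⟩

end Derivable

def Consistent (S : Set (Fml A)) : Prop := ¬ Derivable S Fml.fls

def MaxConsistent (Γ : Set (Fml A)) : Prop :=
  Consistent Γ ∧ ∀ φ, Consistent (insert φ Γ) → φ ∈ Γ

theorem consistent_singleton_iff {φ : Fml A} :
    Consistent ({φ} : Set (Fml A)) ↔ ¬ Prov (Fml.neg φ) := by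
  refine not_congr ⟨fun h => ?_, fun h => .mp (.prov h) (.ax rfl)⟩
  rw [← LawfulSingleton.insert_empty_eq] at h
  exact h.imp_of_insert.prov_of_empty

theorem exists_maxConsistent_superset {S : Set (Fml A)} (hS : Consistent S) :
    ∃ Γ, S ⊆ Γ ∧ MaxConsistent Γ := by
  obtain ⟨Γ, hSΓ, hmax⟩ := zorn_subset_nonempty {T : Set (Fml A) | Consistent T}
    (fun c hcons hc hne => ⟨⋃₀ c, fun h => by
      obtain ⟨s, hs, hfls⟩ := Derivable.exists_of_sUnion hc hne h
      exact hcons hs hfls, fun _ => Set.subset_sUnion_of_mem⟩) S hS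
  exact ⟨Γ, hSΓ, hmax.prop, fun φ hφ => hmax.2 hφ (Set.subset_insert _ _) (Set.mem_insert _ _)⟩

namespace MaxConsistent

variable {Γ : Set (Fml A)} (hΓ : MaxConsistent Γ)
include hΓ

theorem mem_of_derivable {φ : Fml A} (h : Derivable Γ φ) : φ ∈ Γ :=
  hΓ.2 φ fun hfls => hΓ.1 (.mp hfls.imp_of_insert h)

theorem mem_of_prov {φ : Fml A} (h : Prov φ) : φ ∈ Γ :=
  hΓ.mem_of_derivable (.prov h)

theorem mem_of_prov_imp {φ ψ : Fml A} (h : Prov (Fml.imp φ ψ)) (hφ : φ ∈ Γ) : ψ ∈ Γ :=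
  hΓ.mem_of_derivable (.mp (.prov h) (.ax hφ))

theorem fls_not_mem : Fml.fls ∉ Γ := fun h => hΓ.1 (.ax h)

theorem neg_mem_iff {φ : Fml A} : Fml.neg φ ∈ Γ ↔ φ ∉ Γ :=
  ⟨fun hn h => hΓ.1 (.mp (.ax hn) (.ax h)),
    fun h => hΓ.2 _ fun hc => h (hΓ.mem_of_derivable hc.of_insert_neg_fls)⟩

theorem imp_mem_iff {φ ψ : Fml A} : Fml.imp φ ψ ∈ Γ ↔ (φ ∈ Γ → ψ ∈ Γ) := by
  refine ⟨fun h hφ => hΓ.mem_of_derivable (.mp (.ax h) (.ax hφ)), fun h => ?_⟩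
  by_cases hφ : φ ∈ Γ
  · exact hΓ.mem_of_prov_imp (Prov.imp_intro φ ψ) (h hφ)
  · exact hΓ.mem_of_prov_imp (Prov.neg_imp φ ψ) (hΓ.neg_mem_iff.2 hφ)

theorem and_mem_iff {φ ψ : Fml A} : Fml.and φ ψ ∈ Γ ↔ φ ∈ Γ ∧ ψ ∈ Γ := by
  rw [Fml.and, hΓ.neg_mem_iff, hΓ.imp_mem_iff, hΓ.neg_mem_iff]
  tauto

theorem D_mem_of_derivable {U : Finset A} {φ : Fml A}
    (h : Derivable {ψ | Fml.D U ψ ∈ Γ} φ) : Fml.D U φ ∈ Γ := by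
  induction h with
  | ax h => exact h
  | prov h => exact hΓ.mem_of_prov (Prov.nec U h)
  | mp _ _ ih₁ ih₂ => exact hΓ.imp_mem_iff.1 (hΓ.mem_of_prov_imp (Prov.axK ..) ih₁) ih₂

end MaxConsistent

def CanonRel (U : Finset A) (Γ Δ : Set (Fml A)) : Prop := ∀ φ, Fml.D U φ ∈ Γ → φ ∈ Δ

section CanonRel

variable {U : Finset A} {Γ Δ : Set (Fml A)}

theorem canonRel_symm (hΓ : MaxConsistent Γ) (hΔ : MaxConsistent Δ) (h : CanonRel U Γ Δ) :
    CanonRel U Δ Γ := by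
  intro φ hφ
  by_contra hφΓ
  have hB : Fml.D U (Fml.neg (Fml.D U (Fml.neg (Fml.neg φ)))) ∈ Γ :=
    hΓ.mem_of_prov_imp (Prov.axB U _) (hΓ.neg_mem_iff.2 hφΓ)
  have hnn : Fml.D U (Fml.neg (Fml.neg φ)) ∈ Δ :=
    hΔ.mem_of_prov_imp (Prov.D_mono (Prov.imp_neg_neg φ)) hφ
  exact hΔ.neg_mem_iff.1 (h _ hB) hnn

theorem canonRel_trans {Θ : Set (Fml A)} (hΓ : MaxConsistent Γ) (hΓΔ : CanonRel U Γ Δ)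
    (hΔΘ : CanonRel U Δ Θ) : CanonRel U Γ Θ :=
  fun φ hφ => hΔΘ φ (hΓΔ _ (hΓ.mem_of_prov_imp (Prov.ax4 U φ) hφ))

theorem canonRel_anti {U' : Finset A} (hΓ : MaxConsistent Γ) (hUU' : U ⊆ U')
    (h : CanonRel U' Γ Δ) : CanonRel U Γ Δ :=
  fun φ hφ => h φ (hΓ.mem_of_prov_imp (Prov.axMono φ hUU') hφ)

theorem exists_canonRel_of_D_not_mem {χ : Fml A} (hΓ : MaxConsistent Γ)
    (h : Fml.D U χ ∉ Γ) : ∃ Δ, MaxConsistent Δ ∧ CanonRel U Γ Δ ∧ χ ∉ Δ := by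
  have hcons : Consistent (insert (Fml.neg χ) {φ | Fml.D U φ ∈ Γ}) := fun hfls =>
    h (hΓ.D_mem_of_derivable hfls.of_insert_neg_fls)
  obtain ⟨Δ, hsub, hΔ⟩ := exists_maxConsistent_superset hcons
  exact ⟨Δ, hΔ, fun φ hφ => hsub (Set.mem_insert_of_mem _ hφ),
    hΔ.neg_mem_iff.1 (hsub (Set.mem_insert _ _))⟩

theorem canonRel_self_iff_alive_mem (hΓ : MaxConsistent Γ) :
    CanonRel U Γ Γ ↔ Fml.alive U ∈ Γ := by
  rw [Fml.alive, hΓ.neg_mem_iff]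
  constructor
  · intro h hD
    exact hΓ.neg_mem_iff.1 (h _ hD) (hΓ.mem_of_prov (Prov.imp_self _))
  · intro hD
    obtain ⟨Δ, hΔ, hΓΔ, -⟩ := exists_canonRel_of_D_not_mem hΓ hD
    exact canonRel_trans hΓ hΓΔ (canonRel_symm hΓ hΔ hΓΔ)

end CanonRel

def canonicalModel (A : Type) [DecidableEq A] : GEM A where
  W := {Γ : Set (Fml A) // MaxConsistent Γ}
  rel U Γ Δ := CanonRel U Γ.1 Δ.1
  symm _ Γ Δ := canonRel_symm Γ.2 Δ.2
  trans _ Γ _ _ := canonRel_trans Γ.2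
  mono _ _ hUU' Γ _ := canonRel_anti Γ.2 hUU'
  union U U' Γ hU hU' := by
    rw [canonRel_self_iff_alive_mem Γ.2] at hU hU' ⊢
    exact Γ.2.mem_of_prov_imp (Prov.axUnion U U') (Γ.2.and_mem_iff.2 ⟨hU, hU'⟩)
  val Γ n := Fml.atom n ∈ Γ.1

theorem sat_canonicalModel_iff (φ : Fml A) (Γ : (canonicalModel A).W) :
    Sat (canonicalModel A) Γ φ ↔ φ ∈ Γ.1 := by
  induction φ generalizing Γ with
  | atom p => exact Iff.rfl
  | fls => exact iff_of_false id Γ.2.fls_not_mem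
  | imp φ ψ ihφ ihψ => simp only [Sat, ihφ, ihψ, Γ.2.imp_mem_iff]
  | D U φ ih =>
    refine ⟨fun h => ?_, fun h Δ hΓΔ => (ih Δ).2 (hΓΔ φ h)⟩
    by_contra hD
    obtain ⟨Δ, hΔ, hΓΔ, hφΔ⟩ := exists_canonRel_of_D_not_mem Γ.2 hD
    exact hφΔ ((ih ⟨Δ, hΔ⟩).1 (h ⟨Δ, hΔ⟩ hΓΔ))

theorem exists_canonicalModel_mem_of_not_prov_neg {φ : Fml A} (h : ¬ Prov (Fml.neg φ)) :
    ∃ Γ : (canonicalModel A).W, φ ∈ Γ.1 := by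
  obtain ⟨Γ, hsub, hΓ⟩ := exists_maxConsistent_superset (consistent_singleton_iff.2 h)
  exact ⟨⟨Γ, hΓ⟩, hsub rfl⟩

end Completeness

/-- Completeness of EC_n for generalized epistemic models: every consistent
formula is satisfiable, and equivalently every valid formula is a theorem. -/
theorem stmt12 {A : Type} [DecidableEq A] (φ : Fml A) :
    (¬ Prov (Fml.imp φ Fml.fls) → ∃ (M : GEM A) (w : M.W), Sat M w φ) ∧
    ((∀ (M : GEM A) (w : M.W), Sat M w φ) → Prov φ) := by
  constructor
  · intro hcons
    obtain ⟨Γ, hφ⟩ := exists_canonicalModel_mem_of_not_prov_neg hcons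
    exact ⟨canonicalModel A, Γ, (sat_canonicalModel_iff φ Γ).2 hφ⟩
  · intro hvalid
    by_contra hφ
    obtain ⟨Γ, hnφ⟩ := exists_canonicalModel_mem_of_not_prov_neg (φ := Fml.neg φ)
      fun h => hφ (Prov.mp (Prov.neg_neg_imp φ) h)
    exact Γ.2.neg_mem_iff.1 hnφ ((sat_canonicalModel_iff φ Γ).1 (hvalid _ Γ))
end

section
/- Axiom Min (alive(U) ∧ dead(U^c) ⇒ D_U dead(U^c)) is valid in every minimal generalized epistemic model, and in the canonical model of EC_n + Min, there are no strict sub-worlds: if live(Γ) ⊊ live(Δ) then Γ ≁_{live(Γ)} Δ. -/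
/-- The Hilbert system EC_n extended with an extra set `Ax` of axioms. -/
inductive ProvE {A : Type} [DecidableEq A] (Ax : Set (Fml A)) : Fml A → Prop
  | taut {φ : Fml A} : Taut φ → ProvE Ax φ
  | extra {φ : Fml A} : φ ∈ Ax → ProvE Ax φ
  | mp {φ ψ : Fml A} : ProvE Ax (Fml.imp φ ψ) → ProvE Ax φ → ProvE Ax ψ
  | nec (U : Finset A) {φ : Fml A} : ProvE Ax φ → ProvE Ax (Fml.D U φ)
  | axK (U : Finset A) (φ ψ : Fml A) :
      ProvE Ax (Fml.imp (Fml.D U (Fml.imp φ ψ)) (Fml.imp (Fml.D U φ) (Fml.D U ψ)))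
  | ax4 (U : Finset A) (φ : Fml A) :
      ProvE Ax (Fml.imp (Fml.D U φ) (Fml.D U (Fml.D U φ)))
  | axB (U : Finset A) (φ : Fml A) :
      ProvE Ax (Fml.imp φ (Fml.D U (Fml.neg (Fml.D U (Fml.neg φ)))))
  | axMono {U U' : Finset A} (φ : Fml A) :
      U ⊆ U' → ProvE Ax (Fml.imp (Fml.D U φ) (Fml.D U' φ))
  | axUnion (U U' : Finset A) :
      ProvE Ax (Fml.imp (Fml.and (Fml.alive U) (Fml.alive U')) (Fml.alive (U ∪ U')))

variable {A : Type} [DecidableEq A]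

/-- Consistency with respect to the extended system. -/
def ConSetE (Ax : Set (Fml A)) (Γ : Set (Fml A)) : Prop :=
  ¬ ∃ l : List (Fml A), (∀ ψ ∈ l, ψ ∈ Γ) ∧
      ProvE Ax (Fml.imp (l.foldr Fml.and Fml.tru) Fml.fls)

/-- Maximal consistent sets with respect to the extended system. -/
def MCSE (Ax : Set (Fml A)) (Γ : Set (Fml A)) : Prop :=
  ConSetE Ax Γ ∧ ∀ φ : Fml A, φ ∉ Γ → ¬ ConSetE Ax (insert φ Γ)

attribute [local instance] Classical.propDecidable

/-- `dead V := ⋀_{a ∈ V} K_a ⊥`. -/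
noncomputable def deadG {A : Type} (V : Finset A) : Fml A :=
  (V.toList.map fun a => Fml.D {a} Fml.fls).foldr Fml.and Fml.tru

variable {A : Type} [DecidableEq A] [Fintype A]

/-- The set of alive agents of a world: those `a` with `w ∼_{{a}} w`
(which, by union closure and monotonicity, is the maximal `U` with `w ∼_U w`). -/
noncomputable def liveF (M : GEM A) (w : M.W) : Finset A :=
  Finset.univ.filter fun a => M.rel {a} w w

/-- The set of alive agents of a maximal consistent set in the canonical model. -/
noncomputable def liveC (Γ : Set (Fml A)) : Finset A :=
  Finset.univ.filter fun a => canRel {a} Γ Γ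

/-- All instances of axiom Min: `alive U ∧ dead Uᶜ ⇒ D_U (dead Uᶜ)`. -/
def AxMin : Set (Fml A) :=
  {χ | ∃ U : Finset A,
    χ = Fml.imp (Fml.and (Fml.alive U) (deadG Uᶜ)) (Fml.D U (deadG Uᶜ))}

/-!
In a minimal model, a world satisfying `alive U ∧ dead Uᶜ` has live set exactly `U`. A
`U`-successor is alive on `U`; were it also alive on some `a ∉ U`, its live set would strictly
contain `U`, and minimality forbids the two worlds to be `U`-related.

In the canonical model, a maximal consistent set `Γ` with a `live(Γ)`-successor contains
`alive live(Γ)`, and it contains `dead live(Γ)ᶜ` because an agent `a` with `Γ ≁_{a} Γ` knows `⊥`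
(axioms 4 and B). Axiom Min then puts `D_{live(Γ)} dead live(Γ)ᶜ` into `Γ`, so every
`Δ ∼_{live(Γ)} Γ` contains `dead live(Γ)ᶜ`, which kills every agent of `live(Δ) \ live(Γ)`.
-/

open Fml

section BoolVal

variable {A : Type}

/-- `Taut φ` says exactly that every `IsBoolVal` valuation satisfies `φ`. -/
structure IsBoolVal (v : Fml A → Prop) : Prop where
  imp_iff : ∀ φ ψ, v (imp φ ψ) ↔ (v φ → v ψ)
  not_fls : ¬ v fls

namespace IsBoolVal

variable {v : Fml A → Prop} {φ ψ : Fml A}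

theorem neg_iff (hv : IsBoolVal v) : v (neg φ) ↔ ¬ v φ := by
  simp only [neg, hv.imp_iff, hv.not_fls, imp_false]

theorem tru (hv : IsBoolVal v) : v tru := hv.neg_iff.2 hv.not_fls

theorem and_iff (hv : IsBoolVal v) : v (and φ ψ) ↔ v φ ∧ v ψ := by
  simp only [Fml.and, hv.neg_iff, hv.imp_iff]
  tauto

theorem foldr_and_iff (hv : IsBoolVal v) (l : List (Fml A)) :
    v (l.foldr and Fml.tru) ↔ ∀ ψ ∈ l, v ψ := by
  induction l with
  | nil => simpa using hv.tru
  | cons χ l ih => simp [hv.and_iff, ih]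

theorem deadG_iff (hv : IsBoolVal v) (V : Finset A) :
    v (deadG V) ↔ ∀ a ∈ V, v (D {a} fls) := by
  simp [deadG, hv.foldr_and_iff]

end IsBoolVal

theorem taut_foldr_and_imp {l : List (Fml A)} {φ : Fml A}
    (h : ∀ v, IsBoolVal v → (∀ ψ ∈ l, v ψ) → v φ) : Taut (imp (l.foldr and tru) φ) := by
  intro v himp hfls
  have hv : IsBoolVal v := ⟨himp, hfls⟩
  rw [himp, hv.foldr_and_iff]
  exact h v hv

end BoolVal

section Canonical

variable {A : Type} [DecidableEq A] {Ax : Set (Fml A)} {Γ Δ : Set (Fml A)} {φ ψ : Fml A}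
  {U : Finset A}

theorem ProvE.D_imp_D (h : ProvE Ax (imp φ ψ)) (U : Finset A) :
    ProvE Ax (imp (D U φ) (D U ψ)) :=
  (ProvE.axK U φ ψ).mp (ProvE.nec U h)

namespace MCSE

theorem exists_derives_neg (hΓ : MCSE Ax Γ) (hφ : φ ∉ Γ) :
    ∃ m : List (Fml A), (∀ ψ ∈ m, ψ ∈ Γ) ∧ ProvE Ax (imp (m.foldr and tru) (neg φ)) := by
  obtain ⟨l, hlΓ, hl⟩ := not_not.1 (hΓ.2 φ hφ)
  refine ⟨l.filter (· ≠ φ), fun ψ hψ => ?_, (ProvE.taut ?_).mp hl⟩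
  · obtain ⟨hψl, hne⟩ := List.mem_filter.1 hψ
    exact (Set.mem_insert_iff.1 (hlΓ ψ hψl)).resolve_left (by simpa using hne)
  · intro v himp hfls
    have hv : IsBoolVal v := ⟨himp, hfls⟩
    simp only [himp, neg, hv.foldr_and_iff, List.mem_filter, decide_eq_true_eq, and_imp]
    intro hl hm hφ
    exact hl fun ψ hψ => if h : ψ = φ then h ▸ hφ else hm ψ hψ h

theorem mem_of_derives (hΓ : MCSE Ax Γ) {l : List (Fml A)} (hl : ∀ ψ ∈ l, ψ ∈ Γ)
    (h : ProvE Ax (imp (l.foldr and tru) φ)) : φ ∈ Γ := by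
  by_contra hφ
  obtain ⟨m, hm, hneg⟩ := hΓ.exists_derives_neg hφ
  refine hΓ.1 ⟨l ++ m, fun ψ hψ => (List.mem_append.1 hψ).elim (hl ψ) (hm ψ), ?_⟩
  refine ((ProvE.taut ?_).mp h).mp hneg
  intro v himp hfls
  have hv : IsBoolVal v := ⟨himp, hfls⟩
  simp only [himp, neg, hv.foldr_and_iff, List.mem_append]
  intro hl hm hlm
  exact hm (fun ψ hψ => hlm ψ (.inr hψ)) (hl fun ψ hψ => hlm ψ (.inl hψ))

theorem mem_of_forall_isBoolVal (hΓ : MCSE Ax Γ) {l : List (Fml A)} (hl : ∀ ψ ∈ l, ψ ∈ Γ)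
    (h : ∀ v, IsBoolVal v → (∀ ψ ∈ l, v ψ) → v φ) : φ ∈ Γ :=
  hΓ.mem_of_derives hl (ProvE.taut (taut_foldr_and_imp h))

theorem neg_mem (hΓ : MCSE Ax Γ) (hφ : φ ∉ Γ) : neg φ ∈ Γ :=
  let ⟨_, hm, h⟩ := hΓ.exists_derives_neg hφ
  hΓ.mem_of_derives hm h

theorem mem_of_prov (hΓ : MCSE Ax Γ) (h : ProvE Ax φ) : φ ∈ Γ := by
  refine hΓ.mem_of_derives (l := []) (by simp) ((ProvE.taut ?_).mp h)
  intro v himp _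
  simp only [himp]
  exact fun hφ _ => hφ

theorem fls_not_mem (hΓ : MCSE Ax Γ) : fls ∉ Γ := by
  refine fun h => hΓ.1 ⟨[fls], by simpa using h, ProvE.taut (taut_foldr_and_imp ?_)⟩
  exact fun v _ hl => hl fls (List.mem_singleton_self _)

/-- Membership in a maximal consistent set is a classical valuation, so propositional
reasoning inside `Γ` reduces to reasoning about `IsBoolVal`. -/
theorem isBoolVal (hΓ : MCSE Ax Γ) : IsBoolVal (· ∈ Γ) where
  imp_iff φ ψ := by
    refine ⟨fun h hφ => hΓ.mem_of_forall_isBoolVal (l := [imp φ ψ, φ]) ?_ ?_, fun h => ?_⟩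
    · simpa using ⟨h, hφ⟩
    · intro v hv hl
      exact (hv.imp_iff φ ψ).1 (hl _ (by simp)) (hl _ (by simp))
    · by_cases hφ : φ ∈ Γ
      · refine hΓ.mem_of_forall_isBoolVal (l := [ψ]) (by simpa using h hφ) fun v hv hl => ?_
        exact (hv.imp_iff φ ψ).2 fun _ => hl ψ (List.mem_singleton_self _)
      · refine hΓ.mem_of_forall_isBoolVal (l := [neg φ]) (by simpa using hΓ.neg_mem hφ) ?_
        intro v hv hl
        exact (hv.imp_iff φ ψ).2 fun h => (hv.neg_iff.1 (hl _ (List.mem_singleton_self _)) h).elim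
  not_fls := hΓ.fls_not_mem

theorem mem_of_prov_imp (hΓ : MCSE Ax Γ) (h : ProvE Ax (imp φ ψ)) (hφ : φ ∈ Γ) : ψ ∈ Γ :=
  (hΓ.isBoolVal.imp_iff φ ψ).1 (hΓ.mem_of_prov h) hφ

theorem D_mp (hΓ : MCSE Ax Γ) (h : D U (imp φ ψ) ∈ Γ) (hφ : D U φ ∈ Γ) : D U ψ ∈ Γ :=
  (hΓ.isBoolVal.imp_iff _ _).1 (hΓ.mem_of_prov_imp (ProvE.axK U φ ψ) h) hφ

theorem D_fls_mem_of_not_canRel (hΓ : MCSE Ax Γ) (h : ¬ canRel U Γ Γ) : D U fls ∈ Γ := by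
  obtain ⟨φ, hDφ, hφ⟩ : ∃ φ, D U φ ∈ Γ ∧ φ ∉ Γ := by simpa [canRel] using h
  have hB : D U (neg (D U (neg (neg φ)))) ∈ Γ :=
    hΓ.mem_of_prov_imp (ProvE.axB U (neg φ)) (hΓ.neg_mem hφ)
  have h4 : D U (D U φ) ∈ Γ := hΓ.mem_of_prov_imp (ProvE.ax4 U φ) hDφ
  have hdn : ProvE Ax (imp (D U φ) (imp (neg (D U (neg (neg φ)))) fls)) := by
    have hdn' : ProvE Ax (imp φ (neg (neg φ))) := by
      refine ProvE.taut fun v himp _ => ?_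
      simp only [himp, neg]
      tauto
    refine (ProvE.taut fun v himp _ => ?_).mp (hdn'.D_imp_D U)
    simp only [himp, neg]
    tauto
  exact hΓ.D_mp (hΓ.mem_of_prov_imp (hdn.D_imp_D U) h4) hB

theorem alive_mem_of_canRel (hΔ : MCSE Ax Δ) (hΓ : MCSE Ax Γ) (h : canRel U Γ Δ) :
    alive U ∈ Γ :=
  hΓ.neg_mem fun hD => hΔ.isBoolVal.neg_iff.1 (h _ hD) hΔ.isBoolVal.tru

end MCSE

end Canonical

section Semantics

variable {A : Type} [DecidableEq A]

namespace GEM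

variable (M : GEM A) {U : Finset A} {w w' : M.W}

theorem rel_self_left (h : M.rel U w w') : M.rel U w w :=
  M.trans _ _ _ _ h (M.symm _ _ _ h)

theorem rel_self_right (h : M.rel U w w') : M.rel U w' w' :=
  M.rel_self_left (M.symm _ _ _ h)

end GEM

variable {M : GEM A} {w : M.W} {U : Finset A}

theorem sat_isBoolVal (M : GEM A) (w : M.W) : IsBoolVal (Sat M w) :=
  ⟨fun _ _ => Iff.rfl, id⟩

theorem sat_alive : Sat M w (alive U) ↔ M.rel U w w :=
  ⟨fun h => by_contra fun hw => h fun _ hw' _ => hw (M.rel_self_left hw'),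
    fun hw h => h w hw (sat_isBoolVal M w).tru⟩

end Semantics

theorem mem_liveC {A : Type} [Fintype A] {Γ : Set (Fml A)} {a : A} :
    a ∈ liveC Γ ↔ canRel {a} Γ Γ := by
  simp [liveC]

section Live

variable {Ax : Set (Fml A)} {Γ Δ : Set (Fml A)}

theorem MCSE.deadG_compl_liveC_mem (hΓ : MCSE Ax Γ) : deadG (liveC Γ)ᶜ ∈ Γ :=
  hΓ.isBoolVal.deadG_iff _ |>.2 fun _ ha =>
    hΓ.D_fls_mem_of_not_canRel (by simpa [mem_liveC] using ha)

theorem not_canRel_liveC_of_ssubset (hMin : AxMin ⊆ Ax) (hΓ : MCSE Ax Γ) (hΔ : MCSE Ax Δ)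
    (hlive : liveC Γ ⊂ liveC Δ) : ¬ canRel (liveC Γ) Γ Δ := by
  intro hrel
  set U := liveC Γ
  have hD : D U (deadG Uᶜ) ∈ Γ :=
    hΓ.mem_of_prov_imp (ProvE.extra (hMin ⟨U, rfl⟩)) <|
      hΓ.isBoolVal.and_iff.2 ⟨hΔ.alive_mem_of_canRel hΓ hrel, hΓ.deadG_compl_liveC_mem⟩
  obtain ⟨a, haΔ, haU⟩ := Finset.exists_of_ssubset hlive
  have hdead : D {a} fls ∈ Δ :=
    (hΔ.isBoolVal.deadG_iff _).1 (hrel _ hD) a (Finset.mem_compl.2 haU)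
  exact hΔ.fls_not_mem (mem_liveC.1 haΔ _ hdead)

namespace GEM

variable (M : GEM A) {U : Finset A} {w : M.W}

def IsMinimal : Prop :=
  ∀ w w' : M.W, liveF M w ⊂ liveF M w' → ¬ M.rel (liveF M w) w w'

theorem mem_liveF {a : A} : a ∈ liveF M w ↔ M.rel {a} w w := by
  simp [liveF]

theorem subset_liveF (h : M.rel U w w) : U ⊆ liveF M w :=
  fun _ ha => (M.mem_liveF).2 (M.mono _ _ (Finset.singleton_subset_iff.2 ha) w w h)

end GEM

variable {M : GEM A} {w : M.W} {U : Finset A}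

theorem sat_deadG {V : Finset A} : Sat M w (deadG V) ↔ ∀ a ∈ V, a ∉ liveF M w := by
  simp only [(sat_isBoolVal M w).deadG_iff, GEM.mem_liveF]
  exact forall₂_congr fun _ _ => ⟨fun h hw => h w hw, fun h _ hw => h (M.rel_self_left hw)⟩

theorem liveF_eq_of_sat (halive : Sat M w (alive U)) (hdead : Sat M w (deadG Uᶜ)) :
    liveF M w = U :=
  subset_antisymm
    (fun a ha => by_contra fun haU => sat_deadG.1 hdead a (Finset.mem_compl.2 haU) ha)
    (M.subset_liveF (sat_alive.1 halive))

theorem GEM.IsMinimal.sat_min (hM : M.IsMinimal) (w : M.W) (U : Finset A) :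
    Sat M w (imp (and (alive U) (deadG Uᶜ)) (D U (deadG Uᶜ))) := by
  intro h w' hw'
  obtain ⟨halive, hdead⟩ := (sat_isBoolVal M w).and_iff.1 h
  have hlive := liveF_eq_of_sat halive hdead
  refine sat_deadG.2 fun a ha haw' => hM w w' ?_ (hlive ▸ hw')
  rw [hlive]
  exact LE.le.ssubset_of_not_superset (M.subset_liveF (M.rel_self_right hw'))
    fun h => Finset.mem_compl.1 ha (h haw')

end Live

/-- Axiom Min is valid in every minimal generalized epistemic model, and in the
canonical model of EC_n + Min there are no strict sub-worlds: if
`live(Γ) ⊊ live(Δ)` then `Γ ≁_{live(Γ)} Δ`. -/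
theorem stmt15 :
    (∀ M : GEM A,
      (∀ w w' : M.W, liveF M w ⊂ liveF M w' → ¬ M.rel (liveF M w) w w') →
      ∀ (w : M.W) (U : Finset A),
        Sat M w (Fml.imp (Fml.and (Fml.alive U) (deadG Uᶜ)) (Fml.D U (deadG Uᶜ)))) ∧
    (∀ Γ Δ : Set (Fml A), MCSE (AxMin (A := A)) Γ → MCSE AxMin Δ →
      liveC Γ ⊂ liveC Δ → ¬ canRel (liveC Γ) Γ Δ) :=
  ⟨fun _ hM => GEM.IsMinimal.sat_min hM,
    fun _ _ hΓ hΔ => not_canRel_liveC_of_ssubset subset_rfl hΓ hΔ⟩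
end

section
/- The unraveling U(M) of a generalized epistemic model M is itself a generalized epistemic model: each ∼^u_U is a PER, the family is monotone in U, and it is closed under union of alive groups. -/
variable {A : Type} [DecidableEq A]

/-- Raw histories over a model `M`: a starting world followed by steps `(U, w)`. -/
inductive Hist (M : GEM A) : Type
  | base : M.W → Hist M
  | step : Hist M → Finset A → M.W → Hist M

/-- The last world of a history. -/
def lastW {M : GEM A} : Hist M → M.W
  | .base w => w
  | .step _ _ w => w

/-- A history `(w₀, U₁, w₁, …, U_k, w_k)` is valid when each `w_{i-1} ∼_{U_i} w_i`
and each `U_i` is maximal (w.r.t. inclusion) among groups relating `w_{i-1}` and `w_i`. -/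
def validH {M : GEM A} : Hist M → Prop
  | .base _ => True
  | .step h U w => validH h ∧ M.rel U (lastW h) w ∧
      ∀ V : Finset A, U ⊆ V → M.rel V (lastW h) w → V = U

/-- Valid histories: the worlds of the unraveling. -/
def HistV (M : GEM A) : Type := {h : Hist M // validH h}

/-- `h →_U h'` iff `h'` extends `h` by one step `(U', w)` with `U ⊆ U'`. -/
def stepRel (M : GEM A) (U : Finset A) (h h' : HistV M) : Prop :=
  ∃ (U' : Finset A) (w : M.W), U ⊆ U' ∧ h'.1 = Hist.step h.1 U' w

/-- `∼^u_U`: the symmetric-transitive closure of `→_U`. -/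
def uSim (M : GEM A) (U : Finset A) : HistV M → HistV M → Prop :=
  Relation.TransGen fun x y => stepRel M U x y ∨ stepRel M U y x

/-!
The last-world projection `h ↦ last h` maps `∼^u_U` into `∼_U`, so a `U`-loop at `h` makes
`last h` a `U`-reflexive world of `M`. Conversely, if `last h ∼_V last h`, extending `h` by a
step from `last h` to itself labelled by a maximal group `⊇ V` (it exists as `A` is finite)
and stepping back gives a `V`-loop at `h`. Closure under union of alive groups thus transfers
from `M` to the unraveling; symmetry, transitivity and monotonicity come from the shape of `∼^u`.
-/

namespace GEM

variable {M : GEM A}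

lemma exists_maximal_rel [Fintype A] {U : Finset A} {w w' : M.W} (hr : M.rel U w w') :
    ∃ V, U ⊆ V ∧ M.rel V w w' ∧ ∀ V', V ⊆ V' → M.rel V' w w' → V' = V := by
  obtain ⟨V, hUV, hV⟩ := Finite.exists_le_maximal (p := fun V => M.rel V w w') hr
  exact ⟨V, hUV, hV.prop, fun V' hVV' hV' => le_antisymm (hV.le_of_ge hV' hVV') hVV'⟩

lemma exists_stepRel_of_rel [Fintype A] {U : Finset A} {h : HistV M} {w : M.W}
    (hr : M.rel U (lastW h.1) w) : ∃ h', stepRel M U h h' ∧ lastW h'.1 = w := by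
  obtain ⟨V, hUV, hV, hmax⟩ := exists_maximal_rel hr
  exact ⟨⟨.step h.1 V w, h.2, hV, hmax⟩, ⟨V, w, hUV, rfl⟩, rfl⟩

lemma rel_lastW_of_stepRel {U : Finset A} {h h' : HistV M} (e : stepRel M U h h') :
    M.rel U (lastW h.1) (lastW h'.1) := by
  obtain ⟨V, w, hUV, hh'⟩ := e
  have hvalid := h'.2
  rw [hh'] at hvalid ⊢
  exact M.mono U V hUV _ _ hvalid.2.1

lemma rel_lastW_of_uSim {U : Finset A} {h h' : HistV M} (hs : uSim M U h h') :
    M.rel U (lastW h.1) (lastW h'.1) := by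
  have rel_of_edge : ∀ {x y : HistV M}, stepRel M U x y ∨ stepRel M U y x →
      M.rel U (lastW x.1) (lastW y.1) := by
    rintro x y (e | e)
    · exact rel_lastW_of_stepRel e
    · exact M.symm U _ _ (rel_lastW_of_stepRel e)
  induction hs with
  | single e => exact rel_of_edge e
  | tail _ e ih => exact M.trans U _ _ _ ih (rel_of_edge e)

lemma uSim_symm {U : Finset A} {h h' : HistV M} (hs : uSim M U h h') : uSim M U h' h := by
  induction hs with
  | single e => exact .single e.symm
  | tail _ e ih => exact .head e.symm ih

lemma uSim_anti {U U' : Finset A} (hUU' : U ⊆ U') {h h' : HistV M}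
    (hs : uSim M U' h h') : uSim M U h h' := by
  refine Relation.TransGen.mono (fun x y e => ?_) _ _ hs
  rcases e with ⟨V, w, hV, hxy⟩ | ⟨V, w, hV, hyx⟩
  · exact .inl ⟨V, w, hUU'.trans hV, hxy⟩
  · exact .inr ⟨V, w, hUU'.trans hV, hyx⟩

lemma uSim_self_of_rel_lastW [Fintype A] {U : Finset A} {h : HistV M}
    (hr : M.rel U (lastW h.1) (lastW h.1)) : uSim M U h h := by
  obtain ⟨h', e, -⟩ := exists_stepRel_of_rel hr
  exact .head (.inl e) (.single (.inr e))

end GEM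

/-- The unraveling of a generalized epistemic model is itself a generalized
epistemic model: each `∼^u_U` is a PER, the family is monotone in `U`, and it
is closed under union of alive groups. -/
theorem stmt17 {A : Type} [DecidableEq A] [Fintype A] (M : GEM A) :
    (∀ (U : Finset A) (h h' : HistV M), uSim M U h h' → uSim M U h' h) ∧
    (∀ (U : Finset A) (h₁ h₂ h₃ : HistV M),
      uSim M U h₁ h₂ → uSim M U h₂ h₃ → uSim M U h₁ h₃) ∧
    (∀ U U' : Finset A, U ⊆ U' → ∀ h h' : HistV M, uSim M U' h h' → uSim M U h h') ∧
    (∀ (U U' : Finset A) (h : HistV M),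
      uSim M U h h → uSim M U' h h → uSim M (U ∪ U') h h) :=
  ⟨fun _ _ _ => GEM.uSim_symm,
    fun _ _ _ _ => Relation.TransGen.trans,
    fun _ _ hUU' _ _ => GEM.uSim_anti hUU',
    fun U U' _ hU hU' => GEM.uSim_self_of_rel_lastW
      (M.union U U' _ (GEM.rel_lastW_of_uSim hU) (GEM.rel_lastW_of_uSim hU'))⟩
end
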